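/- arXiv:2203.16596 — 2 statements merged into one kernel-verified Lean document; each statement's English description precedes it below -/
import Mathlib

section
/- Let Omega be a properly convex domain in P(R^d), let x, y be points of the closure of Omega, let z be a point of the open segment (x,y), and let p be in the open face F_Omega(x) and q in the open face F_Omega(y). Then the open segment (p,q) is contained in the open face F_Omega(z). In particular, (p,q) is contained in Omega if and only if (x,y) is contained in Omega. -/
/-!
In the affine chart, with `C` the closure of the image of `Ω`, a point `p` lies in the open face
of `x` exactly when the segment `[x, p]` can be prolonged beyond both endpoints inside `C`. On a
convex set this relation is symmetric and transitive, and averaging prolongations carries it from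
the pairs `(x, p)`, `(y, q)` to `z` and the point of `(p, q)` with the same barycentric coordinates
as `z`; that point is related to every point of `(p, q)`, hence so is `z`.
For the equivalence: `Ω` is open in the affine hyperplane of the chart, so a point prolonging a
segment from a point of `Ω` lies in `Ω`, i.e. open faces of points of `Ω` stay in `Ω`; by symmetry
of faces the inclusion also holds with `(x, y)` and `(p, q)` exchanged.
-/

open Set Filter Topology

noncomputable section

/-- The vector space `ℝ^d`. -/
abbrev Vd (d : ℕ) := Fin d → ℝ

/-- Real projective space `P(ℝ^d)`. -/
abbrev Proj (d : ℕ) := Projectivization ℝ (Vd d)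

instance (d : ℕ) : TopologicalSpace (Proj d) :=
  instTopologicalSpaceQuotient (s := projectivizationSetoid ℝ (Vd d))

variable {d : ℕ}

/-- The affine chart associated to a nonzero linear functional `f`: a point `[v]` with
`f v ≠ 0` is sent to the representative `v / f v` in the affine hyperplane `{w : f w = 1}`. -/
def pchart (f : Vd d →ₗ[ℝ] ℝ) (x : Proj d) : Vd d := (f x.rep)⁻¹ • x.rep

/-- `C ⊆ P(ℝ^d)` is properly convex, realized in the affine chart determined by `f`:
its closure lies in the chart, and its image there is a bounded convex set. -/
structure IsPC (f : Vd d →ₗ[ℝ] ℝ) (C : Set (Proj d)) : Prop where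
  chartOK : ∀ x ∈ closure C, f (Projectivization.rep x) ≠ 0
  bounded : Bornology.IsBounded (pchart f '' C)
  convex : Convex ℝ (pchart f '' C)

/-- A properly convex domain: a nonempty open properly convex subset of `P(ℝ^d)`. -/
structure IsPCDomain (f : Vd d →ₗ[ℝ] ℝ) (Ω : Set (Proj d)) : Prop where
  pc : IsPC f Ω
  isOpen : IsOpen Ω
  nonempty : Ω.Nonempty

/-- The open projective segment `(x,y)`, computed in the affine chart of `f`. -/
def poseg (f : Vd d →ₗ[ℝ] ℝ) (x y : Proj d) : Set (Proj d) :=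
  {z | ∃ w ∈ openSegment ℝ (pchart f x) (pchart f y), ∃ hw : w ≠ 0, z = Projectivization.mk ℝ w hw}

/-- The closed projective segment `[x,y]`, computed in the affine chart of `f`. -/
def pcseg (f : Vd d →ₗ[ℝ] ℝ) (x y : Proj d) : Set (Proj d) :=
  {z | ∃ w ∈ segment ℝ (pchart f x) (pchart f y), ∃ hw : w ≠ 0, z = Projectivization.mk ℝ w hw}

/-- Parameters `t` for which `x + t(y - x)` lies in the closure of `K`. -/
def segSet (K : Set (Vd d)) (x y : Vd d) : Set ℝ := {t : ℝ | x + t • (y - x) ∈ closure K}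

/-- Hilbert distance on a bounded convex set `K` in an affine chart, via the cross ratio:
with `s = sSup`, `r = sInf` of the parameter set (so the boundary points are
`a = x + r(y-x)`, `b = x + s(y-x)`, ordered `a,x,y,b`), this is
`(1/2) log ( s(1-r) / ((s-1)(-r)) ) = (1/2) log (|x-b||y-a| / (|x-a||y-b|))`. -/
def affHilbertDist (K : Set (Vd d)) (x y : Vd d) : ℝ :=
  if x = y then 0 else
    (1/2) * Real.log ((sSup (segSet K x y) * (1 - sInf (segSet K x y))) /
      ((sSup (segSet K x y) - 1) * (- sInf (segSet K x y))))

/-- The Hilbert metric of a properly convex set `Ω`, in the chart of `f`. -/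
def hdist (f : Vd d →ₗ[ℝ] ℝ) (Ω : Set (Proj d)) (x y : Proj d) : ℝ :=
  affHilbertDist (pchart f '' Ω) (pchart f x) (pchart f y)

/-- The open face of a point `x` of the closure of an affine convex set `K`:
`x` together with all `y` in the closure such that some open segment contained in the closure
contains both `x` and `y`. -/
def affFace (K : Set (Vd d)) (x : Vd d) : Set (Vd d) :=
  insert x {y ∈ closure K | ∃ a b : Vd d, openSegment ℝ a b ⊆ closure K ∧
      x ∈ openSegment ℝ a b ∧ y ∈ openSegment ℝ a b}

/-- The open face `F_C(x)` of a point `x ∈ closure C`, for `C` properly convex in the chart of `f`. -/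
def pface (f : Vd d →ₗ[ℝ] ℝ) (C : Set (Proj d)) (x : Proj d) : Set (Proj d) :=
  insert x {y ∈ closure C | pchart f y ∈ affFace (pchart f '' C) (pchart f x)}

/-- `F_C(A) = ⋃_{x ∈ A} F_C(x)`. -/
def pfaceSet (f : Vd d →ₗ[ℝ] ℝ) (C : Set (Proj d)) (A : Set (Proj d)) : Set (Proj d) :=
  ⋃ x ∈ A, pface f C x

/-- The Hilbert metric of the open face `F_C(x)` (a properly convex set open in its span). -/
def pfaceDist (f : Vd d →ₗ[ℝ] ℝ) (C : Set (Proj d)) (x : Proj d) (p q : Proj d) : ℝ :=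
  affHilbertDist (pchart f '' pface f C x) (pchart f p) (pchart f q)

/-- The ideal boundary `∂ᵢ C = closure C ∩ ∂Ω` of a subset `C` of a domain `Ω`. -/
def idealBdry (Ω C : Set (Proj d)) : Set (Proj d) := closure C ∩ frontier Ω

/-- Linear automorphisms of `ℝ^d` (inducing projective transformations). -/
abbrev GLd (d : ℕ) := (Vd d) ≃ₗ[ℝ] (Vd d)

/-- The projective action of a linear automorphism. -/
def pact (g : GLd d) (x : Proj d) : Proj d := Projectivization.map g.toLinearMap g.injective x

/-- Orbit of a point under a set of linear automorphisms. -/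
def orbitOf (S : Set (GLd d)) (p : Proj d) : Set (Proj d) := {q | ∃ γ ∈ S, q = pact γ p}

/-- The limit set of a set of automorphisms of `Ω`: all boundary accumulation points of orbits. -/
def limitSetOf (Ω : Set (Proj d)) (S : Set (GLd d)) : Set (Proj d) :=
  frontier Ω ∩ ⋃ p ∈ Ω, closure (orbitOf S p)

/-- The limit set of a subgroup. -/
def limitSet (Ω : Set (Proj d)) (Γ : Subgroup (GLd d)) : Set (Proj d) :=
  limitSetOf Ω {γ : GLd d | γ ∈ Γ}

/-- Open `r`-neighborhood of `A` in `(Ω, hdist)`. -/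
def hnbhd (f : Vd d →ₗ[ℝ] ℝ) (Ω A : Set (Proj d)) (r : ℝ) : Set (Proj d) :=
  {x ∈ Ω | ∃ a ∈ A, hdist f Ω x a < r}

/-- Open metric ball in `(Ω, hdist)`. -/
def hball (f : Vd d →ₗ[ℝ] ℝ) (Ω : Set (Proj d)) (x₀ : Proj d) (r : ℝ) : Set (Proj d) :=
  {y ∈ Ω | hdist f Ω x₀ y < r}

/-- The Hilbert-metric diameter of `A` is at most `D`. -/
def DiamLE (f : Vd d →ₗ[ℝ] ℝ) (Ω A : Set (Proj d)) (D : ℝ) : Prop :=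
  ∀ x ∈ A, ∀ y ∈ A, hdist f Ω x y ≤ D

/-- `X` is unbounded in `(Ω, hdist)`. -/
def HUnbounded (f : Vd d →ₗ[ℝ] ℝ) (Ω X : Set (Proj d)) : Prop := ¬ ∃ D : ℝ, DiamLE f Ω X D

/-- A strongly isolated collection: intersections of `r`-neighborhoods of distinct
members have uniformly bounded diameter. -/
def StronglyIsolated (f : Vd d →ₗ[ℝ] ℝ) (Ω : Set (Proj d)) (𝒳 : Set (Set (Proj d))) : Prop :=
  ∀ r > (0:ℝ), ∃ D > (0:ℝ), ∀ X₁ ∈ 𝒳, ∀ X₂ ∈ 𝒳, X₁ ≠ X₂ →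
    DiamLE f Ω (hnbhd f Ω X₁ r ∩ hnbhd f Ω X₂ r) D

/-- A `Γ`-invariant collection of sets. -/
def GInvariant (Γ : Subgroup (GLd d)) (𝒳 : Set (Set (Proj d))) : Prop :=
  ∀ γ ∈ Γ, ∀ X ∈ 𝒳, pact γ '' X ∈ 𝒳

/-- A naive convex co-compact triple `(Ω, C, Γ)`. -/
structure IsNCC (f : Vd d →ₗ[ℝ] ℝ) (Ω C : Set (Proj d)) (Γ : Subgroup (GLd d)) : Prop where
  dom : IsPCDomain f Ω
  subset : C ⊆ Ω
  nonempty : C.Nonempty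
  closedIn : closure C ∩ Ω ⊆ C
  convex : Convex ℝ (pchart f '' C)
  invΩ : ∀ γ ∈ Γ, pact γ '' Ω = Ω
  invC : ∀ γ ∈ Γ, pact γ '' C = C
  discrete : ∀ K : Set (Proj d), K ⊆ Ω → IsCompact K →
      {γ : GLd d | γ ∈ Γ ∧ (pact γ '' K ∩ K).Nonempty}.Finite
  cocompact : ∃ K : Set (Proj d), K ⊆ C ∧ IsCompact K ∧ ∀ x ∈ C, ∃ γ ∈ Γ, pact γ x ∈ K

/-- `𝒳` is a collection of closed unbounded convex subsets of `C`. -/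
structure IsCUC (f : Vd d →ₗ[ℝ] ℝ) (Ω C : Set (Proj d)) (𝒳 : Set (Set (Proj d))) : Prop where
  sub : ∀ X ∈ 𝒳, X ⊆ C
  closedIn : ∀ X ∈ 𝒳, closure X ∩ Ω ⊆ X
  unbdd : ∀ X ∈ 𝒳, HUnbounded f Ω X
  convex : ∀ X ∈ 𝒳, Convex ℝ (pchart f '' X)

/-- The standard `k`-dimensional projective simplex, with vertices `e_0, …, e_k`. -/
def stdSimplexP (d k : ℕ) : Set (Proj d) :=
  {x : Proj d | ∃ (c : Vd d) (hc : c ≠ 0), (∀ i : Fin d, (i : ℕ) ≤ k → 0 < c i) ∧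
      (∀ i : Fin d, k < (i : ℕ) → c i = 0) ∧ x = Projectivization.mk ℝ c hc}

/-- `S` is a `k`-dimensional projective simplex. -/
def IsSimplex (k : ℕ) (S : Set (Proj d)) : Prop :=
  ∃ g : GLd d, pact g '' stdSimplexP d k = S

/-- `S` is properly embedded in `C` (the inclusion is a proper map). -/
def ProperlyEmbedded (C S : Set (Proj d)) : Prop := S ⊆ C ∧ closure S ∩ C ⊆ S

/-- `𝒳` coarsely contains the properly embedded simplices of `C` of dimension at least two. -/
def CoarselyContainsSimplices (f : Vd d →ₗ[ℝ] ℝ) (Ω C : Set (Proj d))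
    (𝒳 : Set (Set (Proj d))) : Prop :=
  ∃ D > (0:ℝ), ∀ k : ℕ, 2 ≤ k → ∀ S : Set (Proj d), IsSimplex k S → ProperlyEmbedded C S →
    ∃ X ∈ 𝒳, S ⊆ hnbhd f Ω X D

/-- A peripheral family of the naive convex co-compact triple `(Ω, C, Γ)`. -/
def IsPeripheralFamily (f : Vd d →ₗ[ℝ] ℝ) (Ω C : Set (Proj d)) (Γ : Subgroup (GLd d))
    (𝒳 : Set (Set (Proj d))) : Prop :=
  GInvariant Γ 𝒳 ∧ StronglyIsolated f Ω 𝒳 ∧ CoarselyContainsSimplices f Ω C 𝒳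

/-- `Hausdorff distance between A and B (w.r.t. the distance function ρ) is at most M`. -/
def HausdorffLE {α : Type*} (ρ : α → α → ℝ) (A B : Set α) (M : ℝ) : Prop :=
  (∀ a ∈ A, ∀ ε > (0:ℝ), ∃ b ∈ B, ρ a b < M + ε) ∧
  (∀ b ∈ B, ∀ ε > (0:ℝ), ∃ a ∈ A, ρ a b < M + ε)

/-- The closed convex hull of `A ⊆ closure Ω` taken inside `closure Ω`, in the chart of `f`. -/
def projConvHull (f : Vd d →ₗ[ℝ] ℝ) (Ω A : Set (Proj d)) : Set (Proj d) :=
  {z ∈ closure Ω | pchart f z ∈ closure (convexHull ℝ (pchart f '' A))}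

/-- The convex core of `Γ`: the closed convex hull of the limit set, intersected with `Ω`. -/
def pcore (f : Vd d →ₗ[ℝ] ℝ) (Ω : Set (Proj d)) (Γ : Subgroup (GLd d)) : Set (Proj d) :=
  projConvHull f Ω (limitSet Ω Γ) ∩ Ω

/-- `Γ` is a convex co-compact subgroup of `Aut(Ω)`. -/
structure IsCCSubgroup (f : Vd d →ₗ[ℝ] ℝ) (Ω : Set (Proj d)) (Γ : Subgroup (GLd d)) : Prop where
  dom : IsPCDomain f Ω
  invΩ : ∀ γ ∈ Γ, pact γ '' Ω = Ω
  discrete : ∀ K : Set (Proj d), K ⊆ Ω → IsCompact K →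
      {γ : GLd d | γ ∈ Γ ∧ (pact γ '' K ∩ K).Nonempty}.Finite
  coreNonempty : (pcore f Ω Γ).Nonempty
  cocompact : ∃ K : Set (Proj d), K ⊆ pcore f Ω Γ ∧ IsCompact K ∧
      ∀ x ∈ pcore f Ω Γ, ∃ γ ∈ Γ, pact γ x ∈ K
section SegmentExtends

variable {E : Type*} [AddCommGroup E] [Module ℝ E]

def SegmentExtends (C : Set E) (x y : E) : Prop :=
  ∃ ε > (0 : ℝ), x + ε • (x - y) ∈ C ∧ y + ε • (y - x) ∈ C

variable {C : Set E} {a b x y z p q : E}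

theorem segmentExtends_self (hx : x ∈ C) : SegmentExtends C x x :=
  ⟨1, one_pos, by simpa using hx, by simpa using hx⟩

theorem SegmentExtends.symm (h : SegmentExtends C x y) : SegmentExtends C y x :=
  let ⟨ε, hε, hxy, hyx⟩ := h
  ⟨ε, hε, hyx, hxy⟩

theorem SegmentExtends.of_eventually
    (h : ∀ᶠ ε in 𝓝[>] (0 : ℝ), x + ε • (x - y) ∈ C ∧ y + ε • (y - x) ∈ C) :
    SegmentExtends C x y :=
  let ⟨ε, hε, hpos⟩ := (h.and self_mem_nhdsWithin).exists
  ⟨ε, hpos, hε⟩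

theorem SegmentExtends.exists_mem_openSegment (h : SegmentExtends C x y) :
    ∃ a ∈ C, ∃ b ∈ C, x ∈ openSegment ℝ a b ∧ y ∈ openSegment ℝ a b := by
  obtain ⟨ε, hε, ha, hb⟩ := h
  refine ⟨_, ha, _, hb, ⟨(1 + ε) / (1 + 2 * ε), ε / (1 + 2 * ε), by positivity, by positivity,
    by field_simp; ring, ?_⟩, ⟨ε / (1 + 2 * ε), (1 + ε) / (1 + 2 * ε), by positivity,
    by positivity, by field_simp; ring, ?_⟩⟩ <;>
  · match_scalars <;> field_simp <;> ring

theorem SegmentExtends.left_mem (hC : Convex ℝ C) (h : SegmentExtends C x y) : x ∈ C :=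
  let ⟨_, ha, _, hb, hx, _⟩ := h.exists_mem_openSegment
  hC.openSegment_subset ha hb hx

theorem SegmentExtends.right_mem (hC : Convex ℝ C) (h : SegmentExtends C x y) : y ∈ C :=
  h.symm.left_mem hC

theorem SegmentExtends.eventually (hC : Convex ℝ C) (h : SegmentExtends C x y) :
    ∀ᶠ ε in 𝓝[>] (0 : ℝ), x + ε • (x - y) ∈ C ∧ y + ε • (y - x) ∈ C := by
  have hx := h.left_mem hC
  have hy := h.right_mem hC
  obtain ⟨ε₀, hε₀, hxy, hyx⟩ := h
  have shrink {v w : E} (hv : v ∈ C) (hvw : v + ε₀ • (v - w) ∈ C) {ε : ℝ} (hε : ε ∈ Ioo 0 ε₀) :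
      v + ε • (v - w) ∈ C := by
    convert hC.add_smul_sub_mem hv hvw
      ⟨div_nonneg hε.1.le hε₀.le, (div_le_one hε₀).2 hε.2.le⟩ using 1
    match_scalars <;> field_simp
    ring
  filter_upwards [Ioo_mem_nhdsGT hε₀] with ε hε
  exact ⟨shrink hx hxy hε, shrink hy hyx hε⟩

theorem segmentExtends_of_mem_openSegment (hab : openSegment ℝ a b ⊆ C)
    (hx : x ∈ openSegment ℝ a b) (hy : y ∈ openSegment ℝ a b) : SegmentExtends C x y := by
  rw [openSegment_eq_image] at hx hy
  obtain ⟨s, hs, rfl⟩ := hx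
  obtain ⟨t, ht, rfl⟩ := hy
  have stays {s t : ℝ} (hs : s ∈ Ioo (0 : ℝ) 1) :
      ∀ᶠ ε in 𝓝[>] (0 : ℝ), s + ε * (s - t) ∈ Ioo (0 : ℝ) 1 := by
    refine nhdsWithin_le_nhds (ContinuousAt.eventually_mem ?_ (isOpen_Ioo.mem_nhds (by simpa)))
    fun_prop
  refine .of_eventually ?_
  filter_upwards [stays (t := t) hs, stays (t := s) ht] with ε hst hts
  constructor
  · convert hab (by rw [openSegment_eq_image]; exact ⟨_, hst, rfl⟩) using 1
    module
  · convert hab (by rw [openSegment_eq_image]; exact ⟨_, hts, rfl⟩) using 1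
    module

theorem SegmentExtends.smul_add_smul (hC : Convex ℝ C) (hxp : SegmentExtends C x p)
    (hyq : SegmentExtends C y q) {s t : ℝ} (hs : 0 ≤ s) (ht : 0 ≤ t) (hst : s + t = 1) :
    SegmentExtends C (s • x + t • y) (s • p + t • q) := by
  refine .of_eventually ?_
  filter_upwards [hxp.eventually hC, hyq.eventually hC] with ε ⟨hxp, hpx⟩ ⟨hyq, hqy⟩
  constructor
  · convert hC hxp hyq hs ht hst using 1; module
  · convert hC hpx hqy hs ht hst using 1; module

-- `x + st/(1+s+t) • (x - z)` is a convex combination of the two prolongations at `x` and `y`.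
theorem SegmentExtends.trans (hC : Convex ℝ C) (hxy : SegmentExtends C x y)
    (hyz : SegmentExtends C y z) : SegmentExtends C x z := by
  obtain ⟨s, hs, hxy, hyx⟩ := hxy
  obtain ⟨t, ht, hyz, hzy⟩ := hyz
  refine ⟨s * t / (1 + s + t), by positivity, ?_, ?_⟩
  · convert hC hxy hyz (a := (1 + t) / (1 + s + t)) (b := s / (1 + s + t)) (by positivity)
      (by positivity) (by field_simp; ring) using 1
    match_scalars <;> field_simp <;> ring
  · convert hC hzy hyx (a := (1 + s) / (1 + s + t)) (b := t / (1 + s + t)) (by positivity)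
      (by positivity) (by field_simp) using 1
    match_scalars <;> field_simp <;> ring

theorem SegmentExtends.of_mem_openSegment (hC : Convex ℝ C) (hxp : SegmentExtends C x p)
    (hyq : SegmentExtends C y q) {z u : E} (hz : z ∈ openSegment ℝ x y)
    (hu : u ∈ openSegment ℝ p q) : SegmentExtends C z u := by
  obtain ⟨s, t, hs, ht, hst, rfl⟩ := hz
  obtain ⟨s', t', hs', ht', hst', rfl⟩ := hu
  have hpq : openSegment ℝ p q ⊆ C := hC.openSegment_subset (hxp.right_mem hC) (hyq.right_mem hC)
  exact (hxp.smul_add_smul hC hyq hs.le ht.le hst).trans hC <|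
    segmentExtends_of_mem_openSegment hpq ⟨s, t, hs, ht, hst, rfl⟩ ⟨s', t', hs', ht', hst', rfl⟩

theorem Convex.openSegment_subset_of_mem_nhdsWithin [TopologicalSpace E]
    [IsTopologicalAddGroup E] [ContinuousSMul ℝ E] {K : Set E} (hK : Convex ℝ K)
    {f : E →ₗ[ℝ] ℝ} {r : ℝ} (hKr : K ⊆ f ⁻¹' {r}) (hxK : x ∈ K) (hx : K ∈ 𝓝[f ⁻¹' {r}] x)
    {c : E} (hc : c ∈ closure K) (hcr : f c = r) : openSegment ℝ x c ⊆ K := by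
  rintro _ ⟨a, b, ha, hb, hab, rfl⟩
  -- `a • x + b • c = a • g c' + b • c'`, and `g c'` lies in `K` for `c' ∈ K` close to `c`.
  set g : E → E := fun c' ↦ x + (b / a) • (c - c')
  have hg : Tendsto g (𝓝[K] c) (𝓝[f ⁻¹' {r}] x) := by
    refine tendsto_nhdsWithin_iff.2 ⟨?_, eventually_nhdsWithin_of_forall fun c' hc' ↦ ?_⟩
    · exact tendsto_nhdsWithin_of_tendsto_nhds
        ((by fun_prop : Continuous g).tendsto' c x (by simp [g]))
    · have hfx : f x = r := hKr hxK
      have hfc' : f c' = r := hKr hc'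
      simp [g, hfx, hfc', hcr]
  have := mem_closure_iff_nhdsWithin_neBot.1 hc
  obtain ⟨c', hgc', hc'⟩ := ((hg.eventually hx).and self_mem_nhdsWithin).exists
  convert hK hgc' hc' ha.le hb.le hab using 1
  simp only [g, smul_add, smul_smul, smul_sub]
  field_simp
  module

theorem SegmentExtends.right_mem_of_mem_nhdsWithin [TopologicalSpace E]
    [IsTopologicalAddGroup E] [ContinuousSMul ℝ E] {K : Set E} (hK : Convex ℝ K)
    {f : E →ₗ[ℝ] ℝ} (hf : Continuous f) {r : ℝ} (hKr : K ⊆ f ⁻¹' {r}) (hxK : x ∈ K)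
    (hx : K ∈ 𝓝[f ⁻¹' {r}] x) (h : SegmentExtends (closure K) x y) : y ∈ K := by
  obtain ⟨ε, hε, -, hy⟩ := h
  refine hK.openSegment_subset_of_mem_nhdsWithin hKr hxK hx hy
    (closure_minimal hKr (isClosed_singleton.preimage hf) hy)
    ⟨ε / (1 + ε), 1 / (1 + ε), by positivity, by positivity, by field_simp; ring, ?_⟩
  match_scalars <;> field_simp
  ring

end SegmentExtends

section Chart

variable {f : Vd d →ₗ[ℝ] ℝ} {Ω : Set (Proj d)} {x z : Proj d}

theorem pchart_mk (v : Vd d) (hv : v ≠ 0) :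
    pchart f (Projectivization.mk ℝ v hv) = (f v)⁻¹ • v := by
  obtain ⟨a, ha⟩ := Projectivization.exists_smul_eq_mk_rep ℝ v hv
  rw [pchart, ← ha, Units.smul_def, map_smul, smul_eq_mul, smul_smul, mul_inv_rev,
    mul_assoc, inv_mul_cancel₀ a.ne_zero, mul_one]

theorem pchart_mk_of_map_eq_one {v : Vd d} (hv : v ≠ 0) (hv1 : f v = 1) :
    pchart f (Projectivization.mk ℝ v hv) = v := by
  rw [pchart_mk, hv1, inv_one, one_smul]

theorem map_pchart (hx : f x.rep ≠ 0) : f (pchart f x) = 1 := by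
  rw [pchart, map_smul, smul_eq_mul, inv_mul_cancel₀ hx]

theorem pchart_ne_zero (hx : f x.rep ≠ 0) : pchart f x ≠ 0 := fun h ↦ by
  simpa [h] using map_pchart hx

theorem mk_pchart (hx : f x.rep ≠ 0) :
    Projectivization.mk ℝ (pchart f x) (pchart_ne_zero hx) = x := by
  conv_rhs => rw [← Projectivization.mk_rep x]
  exact (Projectivization.mk_eq_mk_iff _ _ _ _ _).2 ⟨Units.mk0 _ (inv_ne_zero hx), rfl⟩

theorem pchart_injOn : InjOn (pchart f) {x : Proj d | f x.rep ≠ 0} := fun x hx y hy hxy ↦ by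
  rw [← mk_pchart hx, ← mk_pchart hy]
  congr 1

theorem map_rep_mk_ne_zero_iff {v : Vd d} (hv : v ≠ 0) :
    f (Projectivization.mk ℝ v hv).rep ≠ 0 ↔ f v ≠ 0 := by
  obtain ⟨a, ha⟩ := Projectivization.exists_smul_eq_mk_rep ℝ v hv
  simp [← ha, Units.smul_def, a.ne_zero]

theorem continuousOn_pchart : ContinuousOn (pchart f) {x : Proj d | f x.rep ≠ 0} := by
  set U := {x : Proj d | f x.rep ≠ 0}
  have hmk : IsQuotientMap (Projectivization.mk' ℝ : {v : Vd d // v ≠ 0} → Proj d) :=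
    isQuotientMap_quotient_mk'
  have hf : Continuous f := f.continuous_of_finiteDimensional
  have hU : IsOpen U := by
    rw [← hmk.isOpen_preimage]
    convert isOpen_ne.preimage (hf.comp continuous_subtype_val) using 1
    ext ⟨v, hv⟩
    exact map_rep_mk_ne_zero_iff hv
  rw [continuousOn_iff_continuous_domRestrict, (hmk.restrictPreimage_isOpen hU).continuous_iff]
  have hchart : U.domRestrict (pchart f) ∘ U.restrictPreimage (Projectivization.mk' ℝ) =
      fun v ↦ (f v.1.1)⁻¹ • v.1.1 := funext fun v ↦ pchart_mk _ v.1.2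
  rw [hchart]
  exact ((hf.comp (continuous_subtype_val.comp continuous_subtype_val)).inv₀
    fun v ↦ (map_rep_mk_ne_zero_iff v.1.2).1 v.2).smul
    (continuous_subtype_val.comp continuous_subtype_val)

theorem pchart_mem_closure_image (hΩ : ∀ x ∈ closure Ω, f x.rep ≠ 0) (hx : x ∈ closure Ω) :
    pchart f x ∈ closure (pchart f '' Ω) :=
  (continuousOn_pchart.mono hΩ).image_closure ⟨x, hx, rfl⟩

theorem mk_mem_closure (hΩ : ∀ x ∈ closure Ω, f x.rep ≠ 0) {v : Vd d}
    (hv : v ∈ closure (pchart f '' Ω)) (hv0 : v ≠ 0) :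
    Projectivization.mk ℝ v hv0 ∈ closure Ω := by
  have hK : pchart f '' Ω ⊆ {v | v ≠ 0} := by
    rintro _ ⟨ω, hω, rfl⟩
    exact pchart_ne_zero (hΩ ω (subset_closure hω))
  have hv' : (⟨v, hv0⟩ : {v : Vd d // v ≠ 0}) ∈ closure (Subtype.val ⁻¹' (pchart f '' Ω)) := by
    rwa [closure_subtype, image_preimage_eq_inter_range, Subtype.range_coe_subtype,
      inter_eq_left.2 hK]
  refine closure_mono ?_ (image_closure_subset_closure_image continuous_quotient_mk' ⟨_, hv', rfl⟩)
  rintro _ ⟨⟨w, hw⟩, ⟨ω, hω, rfl⟩, rfl⟩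
  show Projectivization.mk ℝ (pchart f ω) hw ∈ Ω
  rwa [mk_pchart (hΩ ω (subset_closure hω))]

theorem pchart_image_mem_nhdsWithin (hΩ : ∀ x ∈ closure Ω, f x.rep ≠ 0) (hΩo : IsOpen Ω)
    (hz : z ∈ Ω) : pchart f '' Ω ∈ 𝓝[f ⁻¹' {1}] (pchart f z) := by
  have hz0 := hΩ z (subset_closure hz)
  refine mem_nhdsWithin.2 ⟨Subtype.val '' (Projectivization.mk' ℝ ⁻¹' Ω),
    isOpen_ne.isOpenMap_subtype_val _ (hΩo.preimage continuous_quotient_mk'),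
    ⟨⟨pchart f z, pchart_ne_zero hz0⟩, by simpa [Projectivization.mk'_eq_mk, mk_pchart hz0], rfl⟩,
    ?_⟩
  rintro _ ⟨⟨⟨v, hv⟩, hvΩ, rfl⟩, hv1⟩
  exact ⟨_, hvΩ, pchart_mk_of_map_eq_one hv hv1⟩

end Chart

section Face

variable {f : Vd d →ₗ[ℝ] ℝ} {Ω : Set (Proj d)} {x z p : Proj d}

theorem mem_affFace_iff {K : Set (Vd d)} (hK : Convex ℝ K) {v w : Vd d} (hv : v ∈ closure K) :
    w ∈ affFace K v ↔ SegmentExtends (closure K) v w := by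
  refine ⟨?_, fun h ↦ .inr ⟨h.right_mem hK.closure, ?_⟩⟩
  · rintro (rfl | ⟨-, a, b, hab, hva, hwa⟩)
    exacts [segmentExtends_self hv, segmentExtends_of_mem_openSegment hab hva hwa]
  · obtain ⟨a, ha, b, hb, hva, hwa⟩ := h.exists_mem_openSegment
    exact ⟨a, b, hK.closure.openSegment_subset ha hb, hva, hwa⟩

theorem mem_pface_iff (hΩ : IsPC f Ω) (hx : x ∈ closure Ω) :
    p ∈ pface f Ω x ↔
      p ∈ closure Ω ∧ SegmentExtends (closure (pchart f '' Ω)) (pchart f x) (pchart f p) := by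
  have hxK := pchart_mem_closure_image hΩ.chartOK hx
  refine ⟨?_, fun ⟨hp, h⟩ ↦ .inr ⟨hp, (mem_affFace_iff hΩ.convex hxK).2 h⟩⟩
  rintro (rfl | ⟨hp, h⟩)
  exacts [⟨hx, segmentExtends_self hxK⟩, ⟨hp, (mem_affFace_iff hΩ.convex hxK).1 h⟩]

theorem mem_pface_comm (hΩ : IsPC f Ω) (hx : x ∈ closure Ω) (hp : p ∈ pface f Ω x) :
    x ∈ pface f Ω p := by
  obtain ⟨hp, h⟩ := (mem_pface_iff hΩ hx).1 hp
  exact (mem_pface_iff hΩ hp).2 ⟨hx, h.symm⟩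

theorem pface_subset (hΩ : IsPCDomain f Ω) (hz : z ∈ Ω) : pface f Ω z ⊆ Ω := by
  intro u hu
  obtain ⟨hu, h⟩ := (mem_pface_iff hΩ.pc (subset_closure hz)).1 hu
  have hK : pchart f '' Ω ⊆ f ⁻¹' {1} := by
    rintro _ ⟨ω, hω, rfl⟩
    exact map_pchart (hΩ.pc.chartOK ω (subset_closure hω))
  obtain ⟨ω, hω, hωu⟩ := h.right_mem_of_mem_nhdsWithin hΩ.pc.convex
    f.continuous_of_finiteDimensional hK ⟨z, hz, rfl⟩
    (pchart_image_mem_nhdsWithin hΩ.pc.chartOK hΩ.isOpen hz)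
  rwa [← pchart_injOn (hΩ.pc.chartOK ω (subset_closure hω)) (hΩ.pc.chartOK u hu) hωu]

end Face

section Segment

variable {f : Vd d →ₗ[ℝ] ℝ} {Ω : Set (Proj d)} {x y z p q : Proj d}

theorem mem_closure_and_pchart_mem_openSegment (hΩ : IsPC f Ω) (hx : x ∈ closure Ω)
    (hy : y ∈ closure Ω) (hz : z ∈ poseg f x y) :
    z ∈ closure Ω ∧ pchart f z ∈ openSegment ℝ (pchart f x) (pchart f y) := by
  obtain ⟨w, hw, hw0, rfl⟩ := hz
  have hx1 := map_pchart (hΩ.chartOK x hx)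
  have hy1 := map_pchart (hΩ.chartOK y hy)
  have hw1 : f w = 1 :=
    (convex_singleton (1 : ℝ)).linear_preimage f |>.openSegment_subset hx1 hy1 hw
  rw [pchart_mk_of_map_eq_one hw0 hw1]
  refine ⟨mk_mem_closure hΩ.chartOK ?_ hw0, hw⟩
  exact hΩ.convex.closure.openSegment_subset (pchart_mem_closure_image hΩ.chartOK hx)
    (pchart_mem_closure_image hΩ.chartOK hy) hw

theorem poseg_nonempty (hx : f x.rep ≠ 0) (hy : f y.rep ≠ 0) : (poseg f x y).Nonempty := by
  have hw1 : f ((1 / 2 : ℝ) • pchart f x + (1 / 2 : ℝ) • pchart f y) = 1 := by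
    simp only [map_add, map_smul, map_pchart hx, map_pchart hy]
    norm_num
  have hw0 : (1 / 2 : ℝ) • pchart f x + (1 / 2 : ℝ) • pchart f y ≠ 0 := fun h ↦ by
    rw [h, map_zero] at hw1
    exact zero_ne_one hw1
  exact ⟨_, _, ⟨1 / 2, 1 / 2, by norm_num, by norm_num, by norm_num, rfl⟩, hw0, rfl⟩

theorem poseg_subset_pface (hΩ : IsPC f Ω) (hx : x ∈ closure Ω) (hy : y ∈ closure Ω)
    (hz : z ∈ poseg f x y) (hp : p ∈ pface f Ω x) (hq : q ∈ pface f Ω y) :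
    poseg f p q ⊆ pface f Ω z := by
  intro u hu
  obtain ⟨hz, hxyz⟩ := mem_closure_and_pchart_mem_openSegment hΩ hx hy hz
  obtain ⟨hp, hxp⟩ := (mem_pface_iff hΩ hx).1 hp
  obtain ⟨hq, hyq⟩ := (mem_pface_iff hΩ hy).1 hq
  obtain ⟨hu, hpqu⟩ := mem_closure_and_pchart_mem_openSegment hΩ hp hq hu
  exact (mem_pface_iff hΩ hz).2 ⟨hu, hxp.of_mem_openSegment hΩ.convex.closure hyq hxyz hpqu⟩

end Segment

/-- if `z ∈ (x,y)`, `p ∈ F_Ω(x)`, `q ∈ F_Ω(y)`, then `(p,q) ⊆ F_Ω(z)`;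
in particular `(p,q) ⊆ Ω ↔ (x,y) ⊆ Ω`. -/
theorem stmt_1 {d : ℕ} (f : Vd d →ₗ[ℝ] ℝ) (Ω : Set (Proj d)) (hΩ : IsPCDomain f Ω)
    (x y z p q : Proj d) (hx : x ∈ closure Ω) (hy : y ∈ closure Ω)
    (hz : z ∈ poseg f x y) (hp : p ∈ pface f Ω x) (hq : q ∈ pface f Ω y) :
    poseg f p q ⊆ pface f Ω z ∧ (poseg f p q ⊆ Ω ↔ poseg f x y ⊆ Ω) := by
  have hpΩ := ((mem_pface_iff hΩ.pc hx).1 hp).1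
  have hqΩ := ((mem_pface_iff hΩ.pc hy).1 hq).1
  refine ⟨poseg_subset_pface hΩ.pc hx hy hz hp hq, fun hpq ↦ ?_, fun hxy ↦ ?_⟩
  · obtain ⟨w, hw⟩ := poseg_nonempty (hΩ.pc.chartOK p hpΩ) (hΩ.pc.chartOK q hqΩ)
    exact (poseg_subset_pface hΩ.pc hpΩ hqΩ hw (mem_pface_comm hΩ.pc hx hp)
      (mem_pface_comm hΩ.pc hy hq)).trans (pface_subset hΩ (hpq hw))
  · exact (poseg_subset_pface hΩ.pc hx hy hz hp hq).trans (pface_subset hΩ (hxy hz))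
end
end

section
/- Let (Omega, C, Gamma) be a naive convex co-compact triple and let X be a Gamma-invariant, strongly isolated collection of closed unbounded convex subsets of C. Then for every compact subset K of C, the set { X in X : X ∩ K ≠ empty } is finite. -/
open Set Filter Topology

noncomputable section

variable {d : ℕ}

/-!
Suppose infinitely many members of `𝒳` meet `K`. Work in the affine chart of `f`, where `Ω`
becomes a bounded convex set `U` open in the hyperplane `f = 1`. In each such `X` pick a point
`x_X ∈ X ∩ K` and, since `X` is unbounded, a point `b_X ∈ ∂U` in the closure of the chart of `X`.
By compactness two distinct members `X ≠ Y` have `x_X, x_Y` close and `b_X, b_Y` close. Points of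
`U` at a fixed fraction of the way from a compact set towards `∂U` stay uniformly deep in `U`, so
for every `t < 1` the points at parameter `t` on `[x_X, b_X]` and `[x_Y, b_Y]` are at Hilbert
distance `< 1` once the endpoints are close enough. Both `x_X` and the point at parameter `t` of
`[x_X, b_X]` thus lie in `N₁(X) ∩ N₁(Y)`, yet their Hilbert distance is at least `-log (1 - t) / 2`,
which is unbounded as `t → 1`: this contradicts strong isolation.
-/

lemma Set.Infinite.exists_ne_dist_lt {α M : Type*} [PseudoMetricSpace M] {S : Set α}
    (hS : S.Infinite) {T : Set M} (hT : TotallyBounded T) {F : α → M} (hF : MapsTo F S T)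
    {η : ℝ} (hη : 0 < η) : ∃ X ∈ S, ∃ Y ∈ S, X ≠ Y ∧ dist (F X) (F Y) < η := by
  obtain ⟨c, hc, hcover⟩ := Metric.totallyBounded_iff.1 hT (η / 2) (half_pos hη)
  have hnear : ∀ X ∈ S, ∃ y ∈ c, F X ∈ Metric.ball y (η / 2) := fun X hX => by
    obtain ⟨y, hy, hFy⟩ := mem_iUnion₂.1 (hcover (hF hX))
    exact ⟨y, hy, hFy⟩
  have : Nonempty M := ⟨F hS.nonempty.some⟩
  choose! center hcenter hnear using hnear
  obtain ⟨X, hX, Y, hY, hXY, hcXY⟩ := hS.exists_ne_map_eq_of_mapsTo hcenter hc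
  refine ⟨X, hX, Y, hY, hXY, ?_⟩
  calc dist (F X) (F Y) ≤ dist (F X) (center X) + dist (F Y) (center Y) := by
        rw [hcXY]; exact dist_triangle_right _ _ _
    _ < η / 2 + η / 2 := add_lt_add (hnear X hX) (hnear Y hY)
    _ = η := add_halves η

namespace HilbertChart

open Projectivization Topology Metric Real

section ProjectiveChart

def cone (S : Set (Proj d)) : Set (Vd d) := {v | ∃ hv : v ≠ 0, mk ℝ v hv ∈ S}

variable (f : Vd d →ₗ[ℝ] ℝ)

lemma exists_rep_mk_eq_smul {v : Vd d} (hv : v ≠ 0) :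
    ∃ c : ℝ, c ≠ 0 ∧ (mk ℝ v hv).rep = c • v := by
  obtain ⟨a, ha⟩ := (mk_eq_mk_iff ℝ _ _ (rep_nonzero _) hv).mp (mk_rep (mk ℝ v hv))
  exact ⟨a, a.ne_zero, ha.symm⟩

lemma pchart_mk {v : Vd d} (hv : v ≠ 0) : pchart f (mk ℝ v hv) = (f v)⁻¹ • v := by
  obtain ⟨c, hc, hrep⟩ := exists_rep_mk_eq_smul hv
  rw [pchart, hrep, map_smul, smul_smul, smul_eq_mul, mul_inv, mul_right_comm,
    inv_mul_cancel₀ hc, one_mul]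

lemma pchart_mk_of_eq_one {v : Vd d} (hv : v ≠ 0) (hf : f v = 1) : pchart f (mk ℝ v hv) = v := by
  rw [pchart_mk f hv, hf, inv_one, one_smul]

lemma map_rep_mk_ne_zero_iff {v : Vd d} (hv : v ≠ 0) : f (mk ℝ v hv).rep ≠ 0 ↔ f v ≠ 0 := by
  obtain ⟨c, hc, hrep⟩ := exists_rep_mk_eq_smul hv
  rw [hrep, map_smul, smul_eq_mul, mul_ne_zero_iff, and_iff_right hc]

lemma isQuotientMap_mk' : IsQuotientMap (mk' ℝ : {v : Vd d // v ≠ 0} → Proj d) :=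
  isQuotientMap_quotient_mk'

lemma isOpen_setOf_map_rep_ne_zero : IsOpen {x : Proj d | f x.rep ≠ 0} := by
  rw [← isQuotientMap_mk'.isOpen_preimage]
  have : mk' ℝ ⁻¹' {x : Proj d | f x.rep ≠ 0} = {v | f v.1 ≠ 0} := by
    ext ⟨v, hv⟩
    exact map_rep_mk_ne_zero_iff f hv
  rw [this]
  exact isOpen_ne_fun (f.continuous_of_finiteDimensional.comp continuous_subtype_val)
    continuous_const

lemma continuousOn_pchart : ContinuousOn (pchart f) {x : Proj d | f x.rep ≠ 0} := by
  rw [isQuotientMap_mk'.continuousOn_isOpen_iff (isOpen_setOf_map_rep_ne_zero f)]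
  have hf : Continuous fun v : {v : Vd d // v ≠ 0} => f v.1 :=
    f.continuous_of_finiteDimensional.comp continuous_subtype_val
  have : pchart f ∘ mk' ℝ = fun v => (f v.1)⁻¹ • v.1 := funext fun v => pchart_mk f v.2
  rw [this]
  refine (hf.continuousOn.inv₀ fun v hv => ?_).smul continuous_subtype_val.continuousOn
  exact (map_rep_mk_ne_zero_iff f v.2).mp hv

variable {f}

lemma map_pchart {x : Proj d} (hx : f x.rep ≠ 0) : f (pchart f x) = 1 := by
  rw [pchart, map_smul, smul_eq_mul, inv_mul_cancel₀ hx]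

lemma pchart_ne_zero {x : Proj d} (hx : f x.rep ≠ 0) : pchart f x ≠ 0 := fun h => by
  simpa [h] using map_pchart hx

lemma mk_pchart {x : Proj d} (hx : f x.rep ≠ 0) : mk ℝ (pchart f x) (pchart_ne_zero hx) = x :=
  (mk_eq_mk_iff' ℝ _ _ _ (rep_nonzero x)).mpr ⟨(f x.rep)⁻¹, rfl⟩ |>.trans (mk_rep x)

lemma mem_image_pchart_iff {S : Set (Proj d)} (hS : ∀ x ∈ S, f x.rep ≠ 0) {u : Vd d} :
    u ∈ pchart f '' S ↔ f u = 1 ∧ u ∈ cone S := by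
  constructor
  · rintro ⟨x, hx, rfl⟩
    exact ⟨map_pchart (hS x hx), pchart_ne_zero (hS x hx), by rwa [mk_pchart (hS x hx)]⟩
  · rintro ⟨h1, hu, hmem⟩
    exact ⟨mk ℝ u hu, hmem, pchart_mk_of_eq_one f hu h1⟩

lemma isOpen_cone {S : Set (Proj d)} (hS : IsOpen S) : IsOpen (cone S) := by
  have : cone S = Subtype.val '' (mk' ℝ ⁻¹' S) := by
    ext v
    exact ⟨fun ⟨hv, h⟩ => ⟨⟨v, hv⟩, h, rfl⟩, fun ⟨w, hw, e⟩ => e ▸ ⟨w.2, hw⟩⟩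
  rw [this]
  exact isOpen_compl_singleton.isOpenMap_subtype_val _ (hS.preimage isQuotientMap_mk'.continuous)

lemma mk_mem_closure {S : Set (Proj d)} {v : Vd d} (hv : v ≠ 0) (h : v ∈ closure (cone S)) :
    mk ℝ v hv ∈ closure S := by
  have : (⟨v, hv⟩ : {v : Vd d // v ≠ 0}) ∈ closure (mk' ℝ ⁻¹' S) := by
    rw [IsEmbedding.subtypeVal.closure_eq_preimage_closure_image]
    refine closure_mono ?_ h
    rintro w ⟨hw, hwS⟩
    exact ⟨⟨w, hw⟩, hwS, rfl⟩
  exact closure_mono (image_preimage_subset _ _)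
    (mem_closure_image isQuotientMap_mk'.continuous.continuousAt this)

end ProjectiveChart

variable {f : Vd d →ₗ[ℝ] ℝ} {U : Set (Vd d)}

def levelClosedBall (f : Vd d →ₗ[ℝ] ℝ) (z : Vd d) (r : ℝ) : Set (Vd d) :=
  closedBall z r ∩ f ⁻¹' {f z}

lemma add_mem_levelClosedBall {z v : Vd d} {r : ℝ} (hv : f v = 0) (hr : ‖v‖ ≤ r) :
    z + v ∈ levelClosedBall f z r :=
  ⟨by rwa [mem_closedBall, dist_eq_norm, add_sub_cancel_left], by simp [hv]⟩

section HilbertDistance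

lemma isBounded_segSet {K : Set (Vd d)} (hK : Bornology.IsBounded K) {x y : Vd d} (hxy : x ≠ y) :
    Bornology.IsBounded (segSet K x y) := by
  obtain ⟨R, hR⟩ := hK.closure.subset_closedBall 0
  have hyx : 0 < ‖y - x‖ := norm_pos_iff.2 (sub_ne_zero.2 hxy.symm)
  refine (isBounded_iff_subset_closedBall 0).2 ⟨(R + ‖x‖) / ‖y - x‖, fun t ht => ?_⟩
  rw [mem_closedBall, dist_zero_right, Real.norm_eq_abs, le_div_iff₀ hyx]
  calc |t| * ‖y - x‖ = ‖(x + t • (y - x)) - x‖ := by simp [norm_smul]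
    _ ≤ ‖x + t • (y - x)‖ + ‖x‖ := norm_sub_le _ _
    _ ≤ R + ‖x‖ := by gcongr; simpa using hR ht

lemma affHilbertDist_eq_of_lt {K : Set (Vd d)} {x y : Vd d} (hxy : x ≠ y)
    (hs : 1 < sSup (segSet K x y)) (hr : sInf (segSet K x y) < 0) :
    affHilbertDist K x y = (log (1 + 1 / (sSup (segSet K x y) - 1)) +
      log (1 + 1 / -sInf (segSet K x y))) / 2 := by
  set s := sSup (segSet K x y)
  set r := sInf (segSet K x y)
  have hs' : 0 < s - 1 := sub_pos.2 hs
  have hr' : 0 < -r := neg_pos.2 hr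
  have hcross : s * (1 - r) / ((s - 1) * -r) = (1 + 1 / (s - 1)) * (1 + 1 / -r) := by
    field_simp [hr.ne]
    ring
  rw [affHilbertDist, if_neg hxy, ← log_mul (by positivity) (by positivity), hcross]
  ring

lemma affHilbertDist_le_of_mem_segSet {K : Set (Vd d)} (hK : Bornology.IsBounded K) {x y : Vd d}
    (hxy : x ≠ y) {β : ℝ} (hβ : 0 < β) (hup : 1 + β ∈ segSet K x y)
    (hdown : -β ∈ segSet K x y) : affHilbertDist K x y ≤ 1 / β := by
  have hA := isBounded_segSet hK hxy
  have hs : 1 + β ≤ sSup (segSet K x y) := le_csSup hA.bddAbove hup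
  have hr : sInf (segSet K x y) ≤ -β := csInf_le hA.bddBelow hdown
  have hlog : ∀ u, β ≤ u → log (1 + 1 / u) ≤ 1 / β := fun u hu =>
    have : 0 < u := hβ.trans_le hu
    calc log (1 + 1 / u) ≤ 1 / u := by
          linarith [log_le_sub_one_of_pos (show 0 < 1 + 1 / u by positivity)]
      _ ≤ 1 / β := one_div_le_one_div_of_le hβ hu
  rw [affHilbertDist_eq_of_lt hxy (by linarith) (by linarith)]
  linarith [hlog _ (show β ≤ sSup (segSet K x y) - 1 by linarith),
    hlog _ (show β ≤ -sInf (segSet K x y) by linarith)]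

lemma le_affHilbertDist_of_segSet_le {K : Set (Vd d)} (hK : Bornology.IsBounded K) {x y : Vd d}
    (hxy : x ≠ y) {s : ℝ} (hs1 : 1 < s) (hs : s ∈ segSet K x y)
    (hub : ∀ u ∈ segSet K x y, u ≤ s) {r : ℝ} (hr0 : r < 0) (hr : r ∈ segSet K x y) :
    log (s / (s - 1)) / 2 ≤ affHilbertDist K x y := by
  have hA := isBounded_segSet hK hxy
  have hsup : sSup (segSet K x y) = s :=
    le_antisymm (csSup_le ⟨s, hs⟩ hub) (le_csSup hA.bddAbove hs)
  have hinf : sInf (segSet K x y) < 0 := (csInf_le hA.bddBelow hr).trans_lt hr0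
  rw [affHilbertDist_eq_of_lt hxy (hsup ▸ hs1) hinf, hsup,
    show s / (s - 1) = 1 + 1 / (s - 1) by field_simp [(sub_pos.2 hs1).ne']; ring]
  linarith [log_nonneg (show 1 ≤ 1 + 1 / -sInf (segSet K x y) by
    have := neg_pos.2 hinf; simp only [le_add_iff_nonneg_right]; positivity)]

lemma affHilbertDist_le_norm_sub_div (hU : Bornology.IsBounded U) {δ : ℝ} (hδ : 0 < δ)
    {z w : Vd d} (hz : levelClosedBall f z δ ⊆ closure U) (hw : levelClosedBall f w δ ⊆ closure U)
    (hzw : f z = f w) : affHilbertDist U z w ≤ ‖w - z‖ / δ := by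
  rcases eq_or_ne z w with rfl | hne
  · rw [affHilbertDist, if_pos rfl]
    positivity
  have hn : 0 < ‖w - z‖ := norm_pos_iff.2 (sub_ne_zero.2 hne.symm)
  have hker : ∀ c : ℝ, f (c • (w - z)) = 0 := fun c => by simp [hzw]
  have hnorm : ‖(δ / ‖w - z‖) • (w - z)‖ ≤ δ := by
    rw [norm_smul, Real.norm_of_nonneg (by positivity), div_mul_cancel₀ _ hn.ne']
  have hup : 1 + δ / ‖w - z‖ ∈ segSet U z w := by
    have := hw (add_mem_levelClosedBall (hker (δ / ‖w - z‖)) hnorm)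
    rwa [show w + (δ / ‖w - z‖) • (w - z) = z + (1 + δ / ‖w - z‖) • (w - z) by module] at this
  have hdown : -(δ / ‖w - z‖) ∈ segSet U z w :=
    hz (add_mem_levelClosedBall (hker (-(δ / ‖w - z‖))) (by rwa [neg_smul, norm_neg]))
  simpa using affHilbertDist_le_of_mem_segSet hU hne (by positivity) hup hdown

end HilbertDistance

structure IsChartDomain (f : Vd d →ₗ[ℝ] ℝ) (U : Set (Vd d)) : Prop where
  isBounded : Bornology.IsBounded U
  convex : Convex ℝ U
  map_eq_one : ∀ u ∈ U, f u = 1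
  exists_levelClosedBall_subset : ∀ u ∈ U, ∃ ε > 0, levelClosedBall f u ε ⊆ U

namespace IsChartDomain

lemma map_eq_one_of_mem_closure (hU : IsChartDomain f U) {u : Vd d} (hu : u ∈ closure U) :
    f u = 1 :=
  closure_minimal hU.map_eq_one (isClosed_eq f.continuous_of_finiteDimensional continuous_const) hu

lemma exists_levelClosedBall_subset_of_isCompact (hU : IsChartDomain f U) {L : Set (Vd d)}
    (hL : IsCompact L) (hLU : L ⊆ U) : ∃ δ > 0, ∀ z ∈ L, levelClosedBall f z δ ⊆ U := by
  choose! ε hε hεU using hU.exists_levelClosedBall_subset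
  obtain ⟨δ, hδ, hLδ⟩ := hL.exists_cthickening_subset_open (isOpen_biUnion fun u _ => isOpen_ball)
    fun z hz => mem_biUnion (hLU hz) (mem_ball_self (hε z (hLU hz)))
  refine ⟨δ, hδ, fun z hz w ⟨hwz, hfw⟩ => ?_⟩
  obtain ⟨u, hu, hwu⟩ := mem_iUnion₂.mp (hLδ (mem_cthickening_of_dist_le w z δ L hz hwz))
  refine hεU u hu ⟨ball_subset_closedBall hwu, ?_⟩
  rw [mem_preimage, mem_singleton_iff] at hfw ⊢
  rw [hfw, hU.map_eq_one z (hLU hz), hU.map_eq_one u hu]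

lemma combo_mem_of_mem_closure (hU : IsChartDomain f U) {x c : Vd d} (hx : x ∈ U)
    (hc : c ∈ closure U) {t : ℝ} (ht0 : 0 ≤ t) (ht1 : t < 1) : (1 - t) • x + t • c ∈ U := by
  rcases ht0.eq_or_lt with rfl | ht0
  · simpa using hx
  obtain ⟨ε, hε, hxε⟩ := hU.exists_levelClosedBall_subset x hx
  have h1t : 0 < 1 - t := sub_pos.mpr ht1
  obtain ⟨c', hc', hcc'⟩ := Metric.mem_closure_iff.mp hc ((1 - t) / t * ε) (by positivity)
  -- move `x` inside its ball so that the segment from it to `c` passes through `c' ∈ U`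
  set v : Vd d := (t / (1 - t)) • (c - c')
  have hv : x + v ∈ U := by
    refine hxε (add_mem_levelClosedBall ?_ ?_)
    · simp [v, hU.map_eq_one_of_mem_closure hc, hU.map_eq_one c' hc']
    · rw [norm_smul, Real.norm_of_nonneg (by positivity), ← dist_eq_norm]
      calc t / (1 - t) * dist c c' ≤ t / (1 - t) * ((1 - t) / t * ε) := by gcongr
        _ = ε := by field_simp
  have hcombo : (1 - t) • (x + v) + t • c' = (1 - t) • x + t • c := by
    simp only [v, smul_add, smul_smul, smul_sub]
    rw [show (1 - t) * (t / (1 - t)) = t by field_simp]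
    abel
  exact hcombo ▸ hU.convex hv hc' h1t.le ht0.le (by ring)

lemma levelClosedBall_combo_subset (hU : IsChartDomain f U) {a b : Vd d} {ε : ℝ}
    (ha : levelClosedBall f a ε ⊆ U) (hb : b ∈ closure U) {t : ℝ} (ht0 : 0 ≤ t) (ht1 : t < 1) :
    levelClosedBall f ((1 - t) • a + t • b) ((1 - t) * ε) ⊆ U := by
  rintro w ⟨hw, hfw⟩
  have h1t : 0 < 1 - t := sub_pos.2 ht1
  have hε : 0 ≤ ε := nonneg_of_mul_nonneg_right (dist_nonneg.trans hw) h1t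
  -- `w` is the same combination with `a` replaced by a point of its ball
  have ha' : a + (1 - t)⁻¹ • (w - ((1 - t) • a + t • b)) ∈ U := by
    refine ha (add_mem_levelClosedBall ?_ ?_)
    · simp [show f w = _ from hfw]
    · rw [norm_smul, norm_inv, Real.norm_of_nonneg h1t.le, ← dist_eq_norm, inv_mul_le_iff₀ h1t]
      exact hw
  have := hU.combo_mem_of_mem_closure ha' hb ht0 ht1
  rwa [smul_add, smul_smul, mul_inv_cancel₀ h1t.ne', one_smul,
    show ∀ u v : Vd d, u + (w - (u + v)) + v = w from fun u v => by abel] at this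

lemma affHilbertDist_combo_lt_one (hU : IsChartDomain f U) {δ : ℝ} (hδ : 0 < δ)
    {a a' b b' : Vd d} (ha : levelClosedBall f a δ ⊆ U) (ha' : levelClosedBall f a' δ ⊆ U)
    (hb : b ∈ closure U) (hb' : b' ∈ closure U) {t : ℝ} (ht0 : 0 ≤ t) (ht1 : t < 1)
    (haa' : dist a a' < (1 - t) * δ) (hbb' : dist b b' < (1 - t) * δ) :
    affHilbertDist U ((1 - t) • a + t • b) ((1 - t) • a' + t • b') < 1 := by
  have h1t : 0 < 1 - t := sub_pos.2 ht1
  have hfa : f a = 1 := hU.map_eq_one a (ha ⟨mem_closedBall_self hδ.le, rfl⟩)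
  have hfa' : f a' = 1 := hU.map_eq_one a' (ha' ⟨mem_closedBall_self hδ.le, rfl⟩)
  have hnorm : ‖((1 - t) • a' + t • b') - ((1 - t) • a + t • b)‖ < (1 - t) * δ :=
    calc _ = ‖(1 - t) • (a' - a) + t • (b' - b)‖ := by congr 1; module
      _ ≤ (1 - t) * ‖a' - a‖ + t * ‖b' - b‖ := by
          refine (norm_add_le _ _).trans ?_
          rw [norm_smul, norm_smul, Real.norm_of_nonneg h1t.le, Real.norm_of_nonneg ht0]
      _ < (1 - t) * ((1 - t) * δ) + t * ((1 - t) * δ) := by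
          rw [← dist_eq_norm, ← dist_eq_norm, dist_comm a', dist_comm b']
          rcases ht0.eq_or_lt with rfl | ht0
          · simpa using haa'
          · gcongr
      _ = (1 - t) * δ := by ring
  have hle := affHilbertDist_le_norm_sub_div hU.isBounded (by positivity)
    ((hU.levelClosedBall_combo_subset ha hb ht0 ht1).trans subset_closure)
    ((hU.levelClosedBall_combo_subset ha' hb' ht0 ht1).trans subset_closure)
    (by simp [hfa, hfa', hU.map_eq_one_of_mem_closure hb, hU.map_eq_one_of_mem_closure hb'])
  exact hle.trans_lt ((div_lt_one (by positivity)).2 hnorm)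

lemma neg_log_le_affHilbertDist_combo (hU : IsChartDomain f U) {x b : Vd d} (hx : x ∈ U)
    (hb : b ∈ closure U) (hbU : b ∉ U) {t : ℝ} (ht0 : 0 < t) (ht1 : t < 1) :
    -log (1 - t) / 2 ≤ affHilbertDist U x ((1 - t) • x + t • b) := by
  have hbx : 0 < ‖b - x‖ := norm_pos_iff.2 (sub_ne_zero.2 fun h => hbU (h ▸ hx))
  have hmem : ∀ u : ℝ, u ∈ segSet U x ((1 - t) • x + t • b) ↔
      x + (u * t) • (b - x) ∈ closure U := fun u => by
    rw [segSet, mem_ofPred_eq, show (1 - t) • x + t • b - x = t • (b - x) by module, smul_smul]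
  have hne : x ≠ (1 - t) • x + t • b := fun h => by
    have : t • (b - x) = (1 - t) • x + t • b - x := by module
    rw [← h, sub_self] at this
    exact smul_ne_zero ht0.ne' (norm_pos_iff.1 hbx) this
  have hfb : f b = f x := by rw [hU.map_eq_one_of_mem_closure hb, hU.map_eq_one x hx]
  have hs : 1 / t ∈ segSet U x ((1 - t) • x + t • b) := by
    rw [hmem, one_div_mul_cancel ht0.ne', one_smul, add_sub_cancel]
    exact hb
  -- beyond `b` the line has left `closure U`, or else `b` would be inside an open segment from `x`
  have hub : ∀ u ∈ segSet U x ((1 - t) • x + t • b), u ≤ 1 / t := fun u hu => by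
    by_contra! hut
    have hut1 : 1 < u * t := by rwa [div_lt_iff₀ ht0] at hut
    have hθ : 1 / (u * t) < 1 := (div_lt_one (by linarith)).2 hut1
    have := hU.combo_mem_of_mem_closure hx ((hmem u).1 hu) (by positivity) hθ
    rw [show (1 - 1 / (u * t)) • x + (1 / (u * t)) • (x + (u * t) • (b - x)) =
      x + (1 / (u * t) * (u * t)) • (b - x) by module, one_div_mul_cancel (by positivity),
      one_smul, add_sub_cancel] at this
    exact hbU this
  obtain ⟨ε, hε, hxε⟩ := hU.exists_levelClosedBall_subset x hx
  have hr : -(ε / (t * ‖b - x‖)) ∈ segSet U x ((1 - t) • x + t • b) := by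
    rw [hmem]
    refine subset_closure (hxε (add_mem_levelClosedBall ?_ ?_))
    · simp [hfb]
    · have hc : 0 < ε / (t * ‖b - x‖) := by positivity
      rw [norm_smul, Real.norm_eq_abs, abs_of_neg (by nlinarith)]
      field_simp
      rfl
  have hlb := le_affHilbertDist_of_segSet_le hU.isBounded hne (by rwa [lt_div_iff₀ ht0, one_mul])
    hs hub (neg_lt_zero.2 (by positivity)) hr
  rwa [show 1 / t / (1 / t - 1) = (1 - t)⁻¹ by field_simp, log_inv] at hlb

lemma exists_affHilbertDist_le_of_closure_subset (hU : IsChartDomain f U) {V : Set (Vd d)}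
    (hV : closure V ⊆ U) : ∃ D, ∀ u ∈ V, ∀ v ∈ V, affHilbertDist U u v ≤ D := by
  obtain ⟨δ, hδ, hVδ⟩ := hU.exists_levelClosedBall_subset_of_isCompact
    (hU.isBounded.subset (subset_closure.trans hV)).isCompact_closure hV
  obtain ⟨R, hR⟩ := hU.isBounded.subset_closedBall 0
  have hnorm : ∀ u ∈ V, ‖u‖ ≤ R := fun u hu => by
    simpa using hR (hV (subset_closure hu))
  refine ⟨(R + R) / δ, fun u hu v hv => ?_⟩
  calc affHilbertDist U u v ≤ ‖v - u‖ / δ :=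
        affHilbertDist_le_norm_sub_div hU.isBounded hδ
          ((hVδ u (subset_closure hu)).trans subset_closure)
          ((hVδ v (subset_closure hv)).trans subset_closure)
          (by rw [hU.map_eq_one u (hV (subset_closure hu)),
            hU.map_eq_one v (hV (subset_closure hv))])
    _ ≤ (R + R) / δ := by
        gcongr
        exact (norm_sub_le _ _).trans (add_le_add (hnorm v hv) (hnorm u hu))

end IsChartDomain

variable {Ω : Set (Proj d)}

lemma _root_.IsPCDomain.map_rep_ne_zero (hΩ : IsPCDomain f Ω) {x : Proj d} (hx : x ∈ Ω) :
    f x.rep ≠ 0 :=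
  hΩ.pc.chartOK x (subset_closure hx)

lemma _root_.IsPCDomain.isChartDomain (hΩ : IsPCDomain f Ω) : IsChartDomain f (pchart f '' Ω) where
  isBounded := hΩ.pc.bounded
  convex := hΩ.pc.convex
  map_eq_one := fun u hu => ((mem_image_pchart_iff fun _ => hΩ.map_rep_ne_zero).1 hu).1
  exists_levelClosedBall_subset := fun u hu => by
    rw [mem_image_pchart_iff fun _ => hΩ.map_rep_ne_zero] at hu
    obtain ⟨hfu, hucone⟩ := hu
    obtain ⟨ε, hε, hεcone⟩ := isOpen_iff.1 (isOpen_cone hΩ.isOpen) u hucone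
    refine ⟨ε / 2, half_pos hε, fun w ⟨hw, hfw⟩ => ?_⟩
    rw [mem_image_pchart_iff fun _ => hΩ.map_rep_ne_zero]
    exact ⟨hfw.trans hfu, hεcone (closedBall_subset_ball (half_lt_self hε) hw)⟩

lemma closure_image_pchart_inter_subset (hΩ : IsPCDomain f Ω) {X : Set (Proj d)} (hX : X ⊆ Ω)
    (hXcl : closure X ∩ Ω ⊆ X) : closure (pchart f '' X) ∩ pchart f '' Ω ⊆ pchart f '' X := by
  rintro _ ⟨hp, ω, hω, rfl⟩
  have hcone : pchart f '' X ⊆ cone X := fun w hw =>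
    ((mem_image_pchart_iff fun x hx => hΩ.map_rep_ne_zero (hX hx)).1 hw).2
  have := mk_mem_closure (pchart_ne_zero (hΩ.map_rep_ne_zero hω)) (closure_mono hcone hp)
  rw [mk_pchart (hΩ.map_rep_ne_zero hω)] at this
  exact ⟨ω, hXcl ⟨this, hω⟩, rfl⟩

lemma exists_mem_closure_image_pchart_notMem (hΩ : IsPCDomain f Ω) {X : Set (Proj d)}
    (hunb : HUnbounded f Ω X) : ∃ b ∈ closure (pchart f '' X), b ∉ pchart f '' Ω := by
  by_contra! hcl
  obtain ⟨D, hD⟩ := hΩ.isChartDomain.exists_affHilbertDist_le_of_closure_subset hcl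
  exact hunb ⟨D, fun x hx y hy => hD _ (mem_image_of_mem _ hx) _ (mem_image_of_mem _ hy)⟩

lemma mem_hnbhd_of_mem {A : Set (Proj d)} (hA : A ⊆ Ω) {x : Proj d} (hx : x ∈ A) {r : ℝ}
    (hr : 0 < r) : x ∈ hnbhd f Ω A r :=
  ⟨hA hx, x, hx, by rwa [hdist, affHilbertDist, if_pos rfl]⟩

lemma exists_far_pair_mem_hnbhd_inter (hΩ : IsPCDomain f Ω) {X Y : Set (Proj d)}
    (hX : X ⊆ Ω) (hXcl : closure X ∩ Ω ⊆ X) (hXconv : Convex ℝ (pchart f '' X))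
    (hY : Y ⊆ Ω) (hYcl : closure Y ∩ Ω ⊆ Y) (hYconv : Convex ℝ (pchart f '' Y))
    {x y : Proj d} (hx : x ∈ X) (hy : y ∈ Y) {b b' : Vd d} (hb : b ∈ closure (pchart f '' X))
    (hbΩ : b ∉ pchart f '' Ω) (hb' : b' ∈ closure (pchart f '' Y)) {δ t : ℝ} (hδ : 0 < δ)
    (hxδ : levelClosedBall f (pchart f x) δ ⊆ pchart f '' Ω)
    (hyδ : levelClosedBall f (pchart f y) δ ⊆ pchart f '' Ω) (ht0 : 0 < t) (ht1 : t < 1)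
    (hxy : dist (pchart f x) (pchart f y) < (1 - t) * δ) (hbb' : dist b b' < (1 - t) * δ) :
    ∃ z ∈ hnbhd f Ω X 1 ∩ hnbhd f Ω Y 1, ∃ w ∈ hnbhd f Ω X 1 ∩ hnbhd f Ω Y 1,
      -log (1 - t) / 2 ≤ hdist f Ω z w := by
  have hU := hΩ.isChartDomain
  have hxU : pchart f x ∈ pchart f '' Ω := mem_image_of_mem _ (hX hx)
  have hbU : b ∈ closure (pchart f '' Ω) := closure_mono (image_mono hX) hb
  have hb'U : b' ∈ closure (pchart f '' Ω) := closure_mono (image_mono hY) hb'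
  obtain ⟨z, hz, hzp⟩ : (1 - t) • pchart f x + t • b ∈ pchart f '' X :=
    closure_image_pchart_inter_subset hΩ hX hXcl
      ⟨hXconv.closure (subset_closure (mem_image_of_mem _ hx)) hb (sub_pos.2 ht1).le ht0.le
        (by ring), hU.combo_mem_of_mem_closure hxU hbU ht0.le ht1⟩
  obtain ⟨z', hz', hzp'⟩ : (1 - t) • pchart f y + t • b' ∈ pchart f '' Y :=
    closure_image_pchart_inter_subset hΩ hY hYcl
      ⟨hYconv.closure (subset_closure (mem_image_of_mem _ hy)) hb' (sub_pos.2 ht1).le ht0.le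
        (by ring), hU.combo_mem_of_mem_closure (mem_image_of_mem _ (hY hy)) hb'U ht0.le ht1⟩
  have hxy1 : hdist f Ω x y < 1 := by
    rw [hdist]
    simpa using hU.affHilbertDist_combo_lt_one hδ hxδ hyδ hbU hb'U le_rfl one_pos
      (by simpa using hxy.trans_le (mul_le_of_le_one_left hδ.le (by linarith)))
      (by simpa using hbb'.trans_le (mul_le_of_le_one_left hδ.le (by linarith)))
  have hzz' : hdist f Ω z z' < 1 := by
    rw [hdist, hzp, hzp']
    exact hU.affHilbertDist_combo_lt_one hδ hxδ hyδ hbU hb'U ht0.le ht1 hxy hbb'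
  refine ⟨x, ⟨mem_hnbhd_of_mem hX hx one_pos, hX hx, y, hy, hxy1⟩,
    z, ⟨mem_hnbhd_of_mem hX hz one_pos, hX hz, z', hz', hzz'⟩, ?_⟩
  rw [hdist, hzp]
  exact hU.neg_log_le_affHilbertDist_combo hxU hbU hbΩ ht0 ht1

end HilbertChart

open HilbertChart

theorem stmt_5_general {d : ℕ} (f : Vd d →ₗ[ℝ] ℝ) (Ω C : Set (Proj d)) (Γ : Subgroup (GLd d))
    (h : IsNCC f Ω C Γ) (𝒳 : Set (Set (Proj d))) (h𝒳 : IsCUC f Ω C 𝒳)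
    (hiso : StronglyIsolated f Ω 𝒳)
    (K : Set (Proj d)) (hK : K ⊆ C) (hKc : IsCompact K) :
    {X ∈ 𝒳 | (X ∩ K).Nonempty}.Finite := by
  set U := pchart f '' Ω
  have hU : IsChartDomain f U := h.dom.isChartDomain
  have hKΩ : K ⊆ Ω := hK.trans h.subset
  obtain ⟨δ, hδ, hKδ⟩ := hU.exists_levelClosedBall_subset_of_isCompact
    (hKc.image_of_continuousOn ((continuousOn_pchart f).mono fun x hx =>
      h.dom.map_rep_ne_zero (hKΩ hx))) (image_mono hKΩ)
  obtain ⟨D, hD0, hD⟩ := hiso 1 one_pos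
  -- chosen so that `-log (1 - t) / 2 = D + 1`
  set t := 1 - Real.exp (-(2 * D + 2))
  have ht0 : 0 < t := sub_pos.2 (Real.exp_lt_one_iff.2 (by linarith))
  have ht1 : t < 1 := sub_lt_self 1 (Real.exp_pos _)
  by_contra hS
  have hray : ∀ X ∈ {X ∈ 𝒳 | (X ∩ K).Nonempty}, ∃ xb : Proj d × Vd d,
      xb.1 ∈ X ∩ K ∧ xb.2 ∈ closure (pchart f '' X) ∧ xb.2 ∉ U := fun X ⟨hX, x, hx⟩ =>
    let ⟨b, hb, hbU⟩ := exists_mem_closure_image_pchart_notMem h.dom (h𝒳.unbdd X hX)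
    ⟨(x, b), hx, hb, hbU⟩
  have : Nonempty (Proj d) := ⟨h.nonempty.some⟩
  choose! ray hray using hray
  have hUc : IsCompact (closure U) := hU.isBounded.isCompact_closure
  obtain ⟨X, hX, Y, hY, hXY, hclose⟩ := Set.Infinite.exists_ne_dist_lt hS
    (hUc.prod hUc).totallyBounded (F := fun X => (pchart f (ray X).1, (ray X).2))
    (fun X hX => ⟨subset_closure (mem_image_of_mem _ (hKΩ (hray X hX).1.2)),
      closure_mono (image_mono ((h𝒳.sub X hX.1).trans h.subset)) (hray X hX).2.1⟩)
    (η := (1 - t) * δ) (mul_pos (sub_pos.2 ht1) hδ)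
  rw [Prod.dist_eq, max_lt_iff] at hclose
  obtain ⟨z, hz, w, hw, hzw⟩ := exists_far_pair_mem_hnbhd_inter h.dom
    ((h𝒳.sub X hX.1).trans h.subset) (h𝒳.closedIn X hX.1) (h𝒳.convex X hX.1)
    ((h𝒳.sub Y hY.1).trans h.subset) (h𝒳.closedIn Y hY.1) (h𝒳.convex Y hY.1)
    (hray X hX).1.1 (hray Y hY).1.1 (hray X hX).2.1 (hray X hX).2.2 (hray Y hY).2.1 hδ
    (hKδ _ (mem_image_of_mem _ (hray X hX).1.2)) (hKδ _ (mem_image_of_mem _ (hray Y hY).1.2))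
    ht0 ht1 hclose.1 hclose.2
  have : -Real.log (1 - t) / 2 = D + 1 := by simp only [t, sub_sub_cancel, Real.log_exp]; ring
  linarith [hD X hX.1 Y hY.1 hXY z hz w hw]

/-- for a Γ-invariant strongly isolated collection `𝒳` of closed unbounded
convex subsets of `C`, only finitely many members of `𝒳` meet any compact `K ⊆ C`. -/
theorem stmt_5 {d : ℕ} (f : Vd d →ₗ[ℝ] ℝ) (Ω C : Set (Proj d)) (Γ : Subgroup (GLd d))
    (h : IsNCC f Ω C Γ) (𝒳 : Set (Set (Proj d))) (h𝒳 : IsCUC f Ω C 𝒳)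
    (hinv : GInvariant Γ 𝒳) (hiso : StronglyIsolated f Ω 𝒳)
    (K : Set (Proj d)) (hK : K ⊆ C) (hKc : IsCompact K) :
    {X ∈ 𝒳 | (X ∩ K).Nonempty}.Finite :=
  stmt_5_general f Ω C Γ h 𝒳 h𝒳 hiso K hK hKc
end
end
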